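/- Let a, b, c, x, y, χ be complex numbers with b and c not nonpositive integers. Then Ψ₂(a;b,c; x+χ, y) = Σ_{ℓ=0}^∞ ((a)_ℓ / (ℓ! (b)_ℓ)) Ψ₂(a+ℓ;b+ℓ,c;x,y) χ^ℓ, the series converging for all χ ∈ ℂ. -/

import Mathlib

set_option maxHeartbeats 1000000

open Complex Finset

/-- Pochhammer symbol `(q)_n = q (q+1) ⋯ (q+n-1)`. -/
noncomputable def poch (q : ℂ) (n : ℕ) : ℂ := (ascPochhammer ℂ n).eval q

lemma poch_eq_prod (q : ℂ) (n : ℕ) : poch q n = ∏ j ∈ Finset.range n, (q + j) := by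
  induction n with
  | zero => simp [poch]
  | succ n ih => rw [poch, ascPochhammer_succ_eval, ← poch, ih, Finset.prod_range_succ]

lemma poch_add (q : ℂ) (m n : ℕ) : poch q (m + n) = poch q m * poch (q + m) n := by
  rw [poch_eq_prod, poch_eq_prod, poch_eq_prod, Finset.prod_range_add]
  congr 1
  refine Finset.prod_congr rfl fun j _ => ?_
  push_cast; ring

lemma poch_ne_zero {q : ℂ} (hq : ∀ n : ℕ, q ≠ -(n : ℂ)) (n : ℕ) : poch q n ≠ 0 := by
  rw [poch, Ne, ascPochhammer_eval_eq_zero_iff]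
  rintro ⟨k, -, hk⟩
  exact hq k (by linear_combination hk)

lemma norm_poch_le (q : ℂ) (n : ℕ) :
    ‖poch q n‖ ≤ (‖q‖ + 1) ^ n * n.factorial := by
  rw [poch_eq_prod]
  calc ‖∏ j ∈ range n, (q + j)‖ = ∏ j ∈ range n, ‖q + (j : ℂ)‖ := by
        rw [norm_prod]
    _ ≤ ∏ j ∈ range n, ((‖q‖ + 1) * (j + 1)) := by
        refine Finset.prod_le_prod (fun j _ => norm_nonneg _) fun j _ => ?_
        calc ‖q + (j : ℂ)‖ ≤ ‖q‖ + j := by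
              simpa using norm_add_le q (j : ℂ)
          _ ≤ (‖q‖ + 1) * (j + 1) := by nlinarith [norm_nonneg q, Nat.cast_nonneg (α := ℝ) j]
    _ = (‖q‖ + 1) ^ n * n.factorial := by
        rw [Finset.prod_mul_distrib, Finset.prod_const, Finset.card_range]
        norm_cast
        rw [Finset.prod_range_add_one_eq_factorial]

lemma exists_linear_lower (q : ℂ) (hq : ∀ n : ℕ, q ≠ -(n : ℂ)) :
    ∃ ε : ℝ, 0 < ε ∧ ∀ j : ℕ, ε * (j + 1) ≤ ‖q + j‖ := by
  set J : ℕ := 2 * ⌈‖q‖⌉₊ + 1 with hJ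
  set S : Finset ℝ := insert (1/2 : ℝ) ((Finset.range J).image fun j : ℕ => ‖q + (j:ℂ)‖ / ((j:ℝ) + 1)) with hS
  have hne : S.Nonempty := ⟨1/2, Finset.mem_insert_self _ _⟩
  refine ⟨S.min' hne, ?_, ?_⟩
  · have hmem := S.min'_mem hne
    rcases Finset.mem_insert.mp hmem with h | h'
    · rw [h]; norm_num
    obtain ⟨j, -, h⟩ := Finset.mem_image.mp h'
    · rw [← h]
      have : q + (j : ℂ) ≠ 0 := by
        intro h0
        exact hq j (by linear_combination h0)
      have h1 : (0:ℝ) < ‖q + (j:ℂ)‖ := norm_pos_iff.mpr this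
      positivity
  · intro j
    by_cases hj : j < J
    · have hmem : ‖q + (j:ℂ)‖ / ((j:ℝ) + 1) ∈ S := by
        rw [hS, Finset.mem_insert, Finset.mem_image]
        exact Or.inr ⟨j, Finset.mem_range.mpr hj, rfl⟩
      have := S.min'_le _ hmem
      have hpos : (0:ℝ) < (j:ℝ) + 1 := by positivity
      calc S.min' hne * ((j:ℝ)+1) ≤ ‖q + (j:ℂ)‖ / ((j:ℝ)+1) * ((j:ℝ)+1) := by
            exact mul_le_mul_of_nonneg_right this (le_of_lt hpos)
        _ = ‖q + j‖ := by field_simp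
    · have h2 : S.min' hne ≤ 1/2 := S.min'_le _ (Finset.mem_insert_self _ _)
      have hjR : (2:ℝ) * ‖q‖ + 1 ≤ (j:ℝ) := by
        have h3 : ‖q‖ ≤ (⌈‖q‖⌉₊ : ℝ) := Nat.le_ceil _
        have h4 : (J:ℝ) ≤ (j:ℝ) := by exact_mod_cast Nat.le_of_not_lt hj
        rw [hJ] at h4; push_cast at h4; nlinarith
      have h5 : (j:ℝ) - ‖q‖ ≤ ‖q + j‖ := by
        have := norm_sub_norm_le (j:ℂ) (-q)
        simpa [add_comm, sub_neg_eq_add] using this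
      have hε : 0 < S.min' hne := by
        -- reuse positivity argument cheaply
        have hmem := S.min'_mem hne
        rcases Finset.mem_insert.mp hmem with h | h'
        · rw [h]; norm_num
        · obtain ⟨i, -, h⟩ := Finset.mem_image.mp h'
          rw [← h]
          have : q + (i : ℂ) ≠ 0 := fun h0 => hq i (by linear_combination h0)
          have h1 : (0:ℝ) < ‖q + (i:ℂ)‖ := norm_pos_iff.mpr this
          positivity
      nlinarith

lemma le_norm_poch {q : ℂ} {ε : ℝ} (hε : 0 < ε) (h : ∀ j : ℕ, ε * (j + 1) ≤ ‖q + j‖) (n : ℕ) :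
    ε ^ n * n.factorial ≤ ‖poch q n‖ := by
  rw [poch_eq_prod, norm_prod]
  calc ε ^ n * n.factorial = ∏ j ∈ range n, (ε * (j + 1)) := by
        rw [Finset.prod_mul_distrib, Finset.prod_const, Finset.card_range]
        norm_cast
        rw [Finset.prod_range_add_one_eq_factorial]
    _ ≤ ∏ j ∈ range n, ‖q + (j:ℂ)‖ :=
        Finset.prod_le_prod (fun j _ => by positivity) fun j _ => h j

lemma fact_add_le (m n : ℕ) :
    ((m + n).factorial : ℝ) ≤ 2 ^ (m + n) * m.factorial * n.factorial := by
  have h1 : (m + n).choose n ≤ 2 ^ (m + n) := by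
    calc (m + n).choose n ≤ ∑ i ∈ range (m + n + 1), (m + n).choose i :=
          Finset.single_le_sum (fun i _ => Nat.zero_le _) (Finset.mem_range.mpr (by omega))
      _ = 2 ^ (m + n) := Nat.sum_range_choose _
  have h2 := Nat.add_choose_mul_factorial_mul_factorial m n
  have : (m+n).factorial ≤ 2 ^ (m+n) * m.factorial * n.factorial := by
    calc (m+n).factorial = (m + n).choose n * m.factorial * n.factorial := h2.symm
      _ ≤ 2 ^ (m + n) * m.factorial * n.factorial := by
          exact Nat.mul_le_mul_right _ (Nat.mul_le_mul_right _ h1)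
  exact_mod_cast this

lemma psi2_summand_summable (a b c x y : ℂ) (hb : ∀ n : ℕ, b ≠ -(n : ℂ))
    (hc : ∀ n : ℕ, c ≠ -(n : ℂ)) :
    Summable (fun p : ℕ × ℕ => poch a (p.1 + p.2) * x ^ p.1 * y ^ p.2 /
      ((p.1.factorial : ℂ) * (p.2.factorial : ℂ) * poch b p.1 * poch c p.2)) := by
  obtain ⟨εb, hεb, hBb⟩ := exists_linear_lower b hb
  obtain ⟨εc, hεc, hBc⟩ := exists_linear_lower c hc
  set K : ℝ := ‖a‖ + 1 with hK
  have hK0 : 0 < K := by positivity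
  set A : ℝ := 2 * K * ‖x‖ / εb with hA
  set B : ℝ := 2 * K * ‖y‖ / εc with hB
  have hA0 : 0 ≤ A := by positivity
  have hB0 : 0 ≤ B := by positivity
  have hg : Summable (fun p : ℕ × ℕ => (A ^ p.1 / p.1.factorial) * (B ^ p.2 / p.2.factorial)) :=
    (Real.summable_pow_div_factorial A).mul_of_nonneg (Real.summable_pow_div_factorial B)
      (fun m => by positivity) (fun n => by positivity)
  refine Summable.of_norm_bounded hg ?_
  rintro ⟨m, n⟩
  have hden : (m.factorial : ℝ) * n.factorial * (εb ^ m * m.factorial) * (εc ^ n * n.factorial)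
      ≤ ‖((m.factorial : ℂ) * (n.factorial : ℂ) * poch b m * poch c n)‖ := by
    rw [norm_mul, norm_mul, norm_mul, Complex.norm_natCast, Complex.norm_natCast]
    gcongr
    · exact le_norm_poch hεb hBb m
    · exact le_norm_poch hεc hBc n
  have hdenpos : (0:ℝ) < (m.factorial : ℝ) * n.factorial * (εb ^ m * m.factorial) * (εc ^ n * n.factorial) := by
    positivity
  have hnum : ‖poch a (m + n) * x ^ m * y ^ n‖ ≤ K ^ (m + n) * (m + n).factorial * ‖x‖ ^ m * ‖y‖ ^ n := by
    rw [norm_mul, norm_mul, norm_pow, norm_pow]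
    gcongr
    · exact norm_poch_le a (m + n)
  calc ‖poch a (m + n) * x ^ m * y ^ n /
        ((m.factorial : ℂ) * (n.factorial : ℂ) * poch b m * poch c n)‖
      = ‖poch a (m + n) * x ^ m * y ^ n‖ /
        ‖((m.factorial : ℂ) * (n.factorial : ℂ) * poch b m * poch c n)‖ := norm_div _ _
    _ ≤ (K ^ (m + n) * (m + n).factorial * ‖x‖ ^ m * ‖y‖ ^ n) /
        ((m.factorial : ℝ) * n.factorial * (εb ^ m * m.factorial) * (εc ^ n * n.factorial)) :=
        div_le_div₀ (by positivity) hnum hdenpos hden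
    _ ≤ (K ^ (m + n) * (2 ^ (m + n) * m.factorial * n.factorial) * ‖x‖ ^ m * ‖y‖ ^ n) /
        ((m.factorial : ℝ) * n.factorial * (εb ^ m * m.factorial) * (εc ^ n * n.factorial)) := by
        have := fact_add_le m n
        gcongr
    _ = (A ^ m / m.factorial) * (B ^ n / n.factorial) := by
        rw [hA, hB]
        have h1 : (m.factorial : ℝ) ≠ 0 := Nat.cast_ne_zero.mpr m.factorial_ne_zero
        have h2 : (n.factorial : ℝ) ≠ 0 := Nat.cast_ne_zero.mpr n.factorial_ne_zero
        have h3 : εb ≠ 0 := ne_of_gt hεb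
        have h4 : εc ≠ 0 := ne_of_gt hεc
        rw [div_pow, div_pow, mul_pow, mul_pow, mul_pow, mul_pow, pow_add K, pow_add 2]
        field_simp

lemma shift_ne (b : ℂ) (hb : ∀ n : ℕ, b ≠ -(n : ℂ)) (ℓ : ℕ) :
    ∀ n : ℕ, b + (ℓ : ℂ) ≠ -(n : ℂ) := by
  intro n h
  exact hb (n + ℓ) (by push_cast; linear_combination h)

def antidiagEquiv : (Σ p : ℕ × ℕ, {q : ℕ × ℕ // q ∈ Finset.HasAntidiagonal.antidiagonal p.1}) ≃ ℕ × ℕ × ℕ where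
  toFun s := (s.2.1.1, s.2.1.2, s.1.2)
  invFun t := ⟨(t.1 + t.2.1, t.2.2), ⟨(t.1, t.2.1), Finset.HasAntidiagonal.mem_antidiagonal.mpr rfl⟩⟩
  left_inv := by
    rintro ⟨⟨m, n⟩, ⟨⟨l, k⟩, h⟩⟩
    have h' : l + k = m := Finset.HasAntidiagonal.mem_antidiagonal.mp h
    subst h'
    rfl
  right_inv t := rfl

/-- Confluent hypergeometric function `₁F₁(a; b; x) = ∑ₛ (a)ₛ xˢ / (s! (b)ₛ)`. -/
noncomputable def oneF1 (a b x : ℂ) : ℂ :=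
  ∑' s : ℕ, poch a s * x ^ s / ((s.factorial : ℂ) * poch b s)

/-- Humbert function `Ψ₂(a; b, c; x, y) = ∑ₘ,ₙ (a)ₘ₊ₙ xᵐ yⁿ / (m! n! (b)ₘ (c)ₙ)`. -/
noncomputable def psi2 (a b c x y : ℂ) : ℂ :=
  ∑' p : ℕ × ℕ, poch a (p.1 + p.2) * x ^ p.1 * y ^ p.2 /
    ((p.1.factorial : ℂ) * (p.2.factorial : ℂ) * poch b p.1 * poch c p.2)

theorem stmt18 (a b c x y χ : ℂ) (hb : ∀ n : ℕ, b ≠ -(n : ℂ)) (hc : ∀ n : ℕ, c ≠ -(n : ℂ)) :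
    HasSum (fun ℓ : ℕ => poch a ℓ / ((ℓ.factorial : ℂ) * poch b ℓ) * psi2 (a + ℓ) (b + ℓ) c x y * χ ^ ℓ)
      (psi2 a b c (x + χ) y) := by
  obtain ⟨εb, hεb, hBb⟩ := exists_linear_lower b hb
  obtain ⟨εc, hεc, hBc⟩ := exists_linear_lower c hc
  set T : ℕ × ℕ × ℕ → ℂ := fun t =>
    poch a (t.1 + t.2.1 + t.2.2) * χ ^ t.1 * x ^ t.2.1 * y ^ t.2.2 /
      ((t.1.factorial : ℂ) * (t.2.1.factorial : ℂ) * (t.2.2.factorial : ℂ) *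
        poch b (t.1 + t.2.1) * poch c t.2.2) with hTdef
  -- triple summability
  have hTsum : Summable T := by
    set K : ℝ := ‖a‖ + 1 with hK
    have hK0 : (0:ℝ) < K := by positivity
    have hg : Summable (fun t : ℕ × ℕ × ℕ =>
        ((2*K*‖χ‖/εb) ^ t.1 / t.1.factorial) *
          (((2*K*‖x‖/εb) ^ t.2.1 / t.2.1.factorial) * ((2*K*‖y‖/εc) ^ t.2.2 / t.2.2.factorial))) := by
      refine (Real.summable_pow_div_factorial _).mul_of_nonneg
        ((Real.summable_pow_div_factorial _).mul_of_nonneg (Real.summable_pow_div_factorial _)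
          (fun m => by positivity) (fun n => by positivity))
        (fun m => by positivity) (fun p => by positivity)
    refine Summable.of_norm_bounded hg ?_
    rintro ⟨l, k, n⟩
    have hden : (l.factorial : ℝ) * k.factorial * n.factorial * (εb ^ (l+k) * (l+k).factorial) *
        (εc ^ n * n.factorial)
        ≤ ‖((l.factorial : ℂ) * (k.factorial : ℂ) * (n.factorial : ℂ) *
            poch b (l + k) * poch c n)‖ := by
      rw [norm_mul, norm_mul, norm_mul, norm_mul, Complex.norm_natCast, Complex.norm_natCast,
        Complex.norm_natCast]
      gcongr
      · exact le_norm_poch hεb hBb (l+k)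
      · exact le_norm_poch hεc hBc n
    have hdenpos : (0:ℝ) < (l.factorial : ℝ) * k.factorial * n.factorial *
        (εb ^ (l+k) * (l+k).factorial) * (εc ^ n * n.factorial) := by positivity
    have hnum : ‖poch a (l + k + n) * χ ^ l * x ^ k * y ^ n‖ ≤
        K ^ (l + k + n) * (l + k + n).factorial * ‖χ‖ ^ l * ‖x‖ ^ k * ‖y‖ ^ n := by
      rw [norm_mul, norm_mul, norm_mul, norm_pow, norm_pow, norm_pow]
      gcongr
      · exact norm_poch_le a (l + k + n)
    calc ‖T (l, k, n)‖ = ‖poch a (l + k + n) * χ ^ l * x ^ k * y ^ n‖ /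
          ‖((l.factorial : ℂ) * (k.factorial : ℂ) * (n.factorial : ℂ) *
            poch b (l + k) * poch c n)‖ := by rw [hTdef, norm_div]
      _ ≤ (K ^ (l + k + n) * (l + k + n).factorial * ‖χ‖ ^ l * ‖x‖ ^ k * ‖y‖ ^ n) /
          ((l.factorial : ℝ) * k.factorial * n.factorial * (εb ^ (l+k) * (l+k).factorial) *
            (εc ^ n * n.factorial)) := div_le_div₀ (by positivity) hnum hdenpos hden
      _ ≤ (K ^ (l + k + n) * (2 ^ (l + k + n) * (l+k).factorial * n.factorial) * ‖χ‖ ^ l * ‖x‖ ^ k * ‖y‖ ^ n) /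
          ((l.factorial : ℝ) * k.factorial * n.factorial * (εb ^ (l+k) * (l+k).factorial) *
            (εc ^ n * n.factorial)) := by
          have := fact_add_le (l + k) n
          gcongr
      _ = ((2*K*‖χ‖/εb) ^ l / l.factorial) *
          (((2*K*‖x‖/εb) ^ k / k.factorial) * ((2*K*‖y‖/εc) ^ n / n.factorial)) := by
          have h1 : (l.factorial : ℝ) ≠ 0 := Nat.cast_ne_zero.mpr l.factorial_ne_zero
          have h2 : (k.factorial : ℝ) ≠ 0 := Nat.cast_ne_zero.mpr k.factorial_ne_zero
          have h3 : (n.factorial : ℝ) ≠ 0 := Nat.cast_ne_zero.mpr n.factorial_ne_zero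
          have h4 : ((l+k).factorial : ℝ) ≠ 0 := Nat.cast_ne_zero.mpr (l+k).factorial_ne_zero
          have h5 : εb ≠ 0 := ne_of_gt hεb
          have h6 : εc ≠ 0 := ne_of_gt hεc
          rw [div_pow, div_pow, div_pow, mul_pow, mul_pow, mul_pow, mul_pow, mul_pow, mul_pow,
            pow_add K, pow_add K, pow_add 2, pow_add 2, pow_add εb]
          field_simp
  set S : ℂ := ∑' t, T t with hSdef
  have hS : HasSum T S := hTsum.hasSum
  -- regrouping by (l+k, n) : the sum is psi2 a b c (x+χ) y
  have hV : HasSum (fun p : ℕ × ℕ => poch a (p.1 + p.2) * (x + χ) ^ p.1 * y ^ p.2 /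
      ((p.1.factorial : ℂ) * (p.2.factorial : ℂ) * poch b p.1 * poch c p.2)) S := by
    have h1 : HasSum (T ∘ antidiagEquiv) S := (antidiagEquiv.hasSum_iff).mpr hS
    refine HasSum.sigma h1 ?_
    rintro ⟨m, n⟩
    have h2 := hasSum_fintype
      (fun q : {q : ℕ × ℕ // q ∈ Finset.HasAntidiagonal.antidiagonal m} => (T ∘ antidiagEquiv) ⟨(m, n), q⟩)
    have h3 : ∑ q : {q : ℕ × ℕ // q ∈ Finset.HasAntidiagonal.antidiagonal m}, (T ∘ antidiagEquiv) ⟨(m, n), q⟩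
        = poch a (m + n) * (x + χ) ^ m * y ^ n /
          ((m.factorial : ℂ) * (n.factorial : ℂ) * poch b m * poch c n) := by
      have h4 : ∑ q : {q : ℕ × ℕ // q ∈ Finset.HasAntidiagonal.antidiagonal m}, (T ∘ antidiagEquiv) ⟨(m, n), q⟩
          = ∑ p ∈ Finset.HasAntidiagonal.antidiagonal m, T (p.1, p.2, n) :=
        Finset.sum_coe_sort (Finset.HasAntidiagonal.antidiagonal m) (fun p => T (p.1, p.2, n))
      rw [h4]
      have n1 : poch b m ≠ 0 := poch_ne_zero hb m
      have n3 : poch c n ≠ 0 := poch_ne_zero hc n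
      have n6 : (n.factorial : ℂ) ≠ 0 := Nat.cast_ne_zero.mpr n.factorial_ne_zero
      have n7 : (m.factorial : ℂ) ≠ 0 := Nat.cast_ne_zero.mpr m.factorial_ne_zero
      have hxχ : (x + χ) ^ m = ∑ p ∈ Finset.HasAntidiagonal.antidiagonal m, (m.choose p.1 : ℂ) * χ ^ p.1 * x ^ p.2 := by
        rw [add_comm x χ, (Commute.all χ x).add_pow' m]
        refine Finset.sum_congr rfl fun p _ => ?_
        rw [nsmul_eq_mul]
        ring
      have step : ∀ p ∈ Finset.HasAntidiagonal.antidiagonal m, T (p.1, p.2, n) =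
          poch a (m + n) * y ^ n / ((m.factorial : ℂ) * (n.factorial : ℂ) * poch b m * poch c n) *
            ((m.choose p.1 : ℂ) * χ ^ p.1 * x ^ p.2) := by
        rintro ⟨l, k⟩ hp
        have hlk : l + k = m := Finset.HasAntidiagonal.mem_antidiagonal.mp hp
        subst hlk
        have hnat : (l+k).choose l * l.factorial * k.factorial = (l+k).factorial := by
          rw [add_comm l k, ← Nat.add_choose_mul_factorial_mul_factorial k l]
          ring
        have hch : (((l+k).choose l : ℂ)) * l.factorial * k.factorial = ((l+k).factorial : ℂ) := by
          exact_mod_cast hnat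
        have m1 : poch b (l+k) ≠ 0 := poch_ne_zero hb (l+k)
        have m4 : (l.factorial : ℂ) ≠ 0 := Nat.cast_ne_zero.mpr l.factorial_ne_zero
        have m5 : (k.factorial : ℂ) ≠ 0 := Nat.cast_ne_zero.mpr k.factorial_ne_zero
        rw [hTdef]
        simp only
        field_simp
        linear_combination -poch a (l + k + n) * χ ^ l * x ^ k * y ^ n * hch
      rw [Finset.sum_congr rfl step, ← Finset.mul_sum, ← hxχ]
      field_simp
    rwa [h3] at h2
  have hpsiV : psi2 a b c (x + χ) y = S := hV.tsum_eq
  -- fiberwise in ℓ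
  have hfib : ∀ ℓ : ℕ, HasSum (fun p : ℕ × ℕ => T (ℓ, p))
      (poch a ℓ / ((ℓ.factorial : ℂ) * poch b ℓ) * χ ^ ℓ * psi2 (a + ℓ) (b + ℓ) c x y) := by
    intro ℓ
    have hG : Summable (fun p : ℕ × ℕ => poch (a + ℓ) (p.1 + p.2) * x ^ p.1 * y ^ p.2 /
        ((p.1.factorial : ℂ) * (p.2.factorial : ℂ) * poch (b + ℓ) p.1 * poch c p.2)) :=
      psi2_summand_summable (a + ℓ) (b + ℓ) c x y (shift_ne b hb ℓ) hc
    have hGsum : HasSum (fun p : ℕ × ℕ => poch (a + ℓ) (p.1 + p.2) * x ^ p.1 * y ^ p.2 /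
        ((p.1.factorial : ℂ) * (p.2.factorial : ℂ) * poch (b + ℓ) p.1 * poch c p.2))
        (psi2 (a + ℓ) (b + ℓ) c x y) := hG.hasSum
    have key : (fun p : ℕ × ℕ => T (ℓ, p)) = fun p : ℕ × ℕ =>
        poch a ℓ / ((ℓ.factorial : ℂ) * poch b ℓ) * χ ^ ℓ *
          (poch (a + ℓ) (p.1 + p.2) * x ^ p.1 * y ^ p.2 /
            ((p.1.factorial : ℂ) * (p.2.factorial : ℂ) * poch (b + ℓ) p.1 * poch c p.2)) := by
      funext p
      obtain ⟨k, n⟩ := p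
      have e1 : poch a (ℓ + k + n) = poch a ℓ * poch (a + ℓ) (k + n) := by
        rw [add_assoc, poch_add]
      have e2 : poch b (ℓ + k) = poch b ℓ * poch (b + ℓ) k := poch_add b ℓ k
      have n1 : poch b ℓ ≠ 0 := poch_ne_zero hb ℓ
      have n2 : poch (b + ℓ) k ≠ 0 := poch_ne_zero (shift_ne b hb ℓ) k
      have n3 : poch c n ≠ 0 := poch_ne_zero hc n
      have n4 : (ℓ.factorial : ℂ) ≠ 0 := Nat.cast_ne_zero.mpr ℓ.factorial_ne_zero
      have n5 : (k.factorial : ℂ) ≠ 0 := Nat.cast_ne_zero.mpr k.factorial_ne_zero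
      have n6 : (n.factorial : ℂ) ≠ 0 := Nat.cast_ne_zero.mpr n.factorial_ne_zero
      rw [hTdef]
      simp only
      rw [e1, e2]
      field_simp
    rw [key]
    exact hGsum.mul_left _
  have hsum2 : HasSum (fun ℓ : ℕ => poch a ℓ / ((ℓ.factorial : ℂ) * poch b ℓ) * χ ^ ℓ *
      psi2 (a + ℓ) (b + ℓ) c x y) S := hS.prod_fiberwise hfib
  rw [hpsiV]
  have hfe : (fun ℓ : ℕ => poch a ℓ / ((ℓ.factorial : ℂ) * poch b ℓ) * psi2 (a + ℓ) (b + ℓ) c x y * χ ^ ℓ)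
      = fun ℓ : ℕ => poch a ℓ / ((ℓ.factorial : ℂ) * poch b ℓ) * χ ^ ℓ * psi2 (a + ℓ) (b + ℓ) c x y :=
    funext fun ℓ => by ring
  rw [hfe]
  exact hsum2
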